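/- Suppose k_i ≥ 2 for all i and there exists an index i with v_i = max_j v_j and k_i = min_j k_j. Then C(v,k,2) = C(v_max, k_min, 2). -/

import Mathlib

open Finset

/-- A generalized covering design of strength `t`: the blocks are indexed by `R`;
block `D r` has `i`-th component a `k i`-subset of the `v i`-set `Fin (v i)`, and every
admissible tuple of sets `T` (componentwise sizes at most `k`, total size `t`) is contained
componentwise in some block. -/
def IsGCD {ι : Type*} [Fintype ι] (v k : ι → ℕ) (t : ℕ) {R : Type*}
    (D : R → ∀ i, Finset (Fin (v i))) : Prop :=
  (∀ r i, (D r i).card = k i) ∧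
  ∀ T : ∀ i, Finset (Fin (v i)),
    (∀ i, (T i).card ≤ k i) → (∑ i, (T i).card) = t →
    ∃ r, ∀ i, T i ⊆ D r i

/-- The generalized covering number: the least `N` such that a generalized covering design
with `N` blocks exists. -/
noncomputable def GCNum {ι : Type*} [Fintype ι] (v k : ι → ℕ) (t : ℕ) : ℕ :=
  sInf {N | ∃ D : Fin N → ∀ i, Finset (Fin (v i)), IsGCD v k t D}

/-- An ordinary `(v,k,t)`-covering design with `N` blocks. -/
def IsCover (v k t : ℕ) {N : ℕ} (D : Fin N → Finset (Fin v)) : Prop :=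
  (∀ r, (D r).card = k) ∧ ∀ T : Finset (Fin v), T.card = t → ∃ r, T ⊆ D r

/-- The ordinary covering number `C(v,k,t)`. -/
noncomputable def coverNum (v k t : ℕ) : ℕ :=
  sInf {N | ∃ D : Fin N → Finset (Fin v), IsCover v k t D}

/-!
A generalized covering design restricted to a coordinate `i₀` with `t ≤ k i₀` is an ordinary
`(v i₀, k i₀, t)`-covering design: a `t`-set placed in coordinate `i₀` alone is admissible.
Conversely, if `v i₀` is the largest and `k i₀` the smallest parameter, embed every
`Fin (v i)` into `Fin (v i₀)`. An admissible tuple then has at most `t` points in total, so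
its union lies in a block `B` of an ordinary covering design, and each component lies in the
preimage of `B`, which has at most `k i₀ ≤ k i` points and can be padded to a `k i`-set.
-/

theorem Finset.exists_card_eq_forall_map_subset {α β : Type*} [Fintype α] (f : α ↪ β)
    (s : Finset β) {k : ℕ} (hsk : #s ≤ k) (hk : k ≤ Fintype.card α) :
    ∃ u : Finset α, #u = k ∧ ∀ T : Finset α, T.map f ⊆ s → T ⊆ u := by
  have hpre : #(s.preimage f f.injective.injOn) ≤ k :=
    (card_le_card_of_injOn f (fun _ hx => mem_preimage.1 hx) f.injective.injOn).trans hsk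
  obtain ⟨u, hsub, -, hu⟩ := exists_subsuperset_card_eq (subset_univ _) hpre (by simpa using hk)
  exact ⟨u, hu, fun T hT => (map_subset_iff_subset_preimage.1 hT).trans hsub⟩

theorem IsCover.exists_subset_of_card_le {n k t N : ℕ} {B : Fin N → Finset (Fin n)}
    (hB : IsCover n k t B) (htn : t ≤ n) {S : Finset (Fin n)} (hS : #S ≤ t) :
    ∃ r, S ⊆ B r := by
  obtain ⟨S', hSS', -, hS'⟩ := exists_subsuperset_card_eq (subset_univ S) hS (by simpa using htn)
  obtain ⟨r, hr⟩ := hB.2 S' hS'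
  exact ⟨r, hSS'.trans hr⟩

theorem IsGCD.isCover_apply {ι : Type*} [Fintype ι] {v k : ι → ℕ} {t N : ℕ}
    {D : Fin N → ∀ i, Finset (Fin (v i))} (hD : IsGCD v k t D) (i₀ : ι) (ht : t ≤ k i₀) :
    IsCover (v i₀) (k i₀) t (fun r => D r i₀) := by
  classical
  refine ⟨fun r => hD.1 r i₀, fun T hT => ?_⟩
  let T' : ∀ i, Finset (Fin (v i)) := Function.update (fun _ => ∅) i₀ T
  have hsum : ∑ i, #(T' i) = t := by
    rw [sum_eq_single i₀ (fun i _ hi => by simp [T', hi]) (by simp)]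
    simp [T', hT]
  obtain ⟨r, hr⟩ := hD.2 T'
    (fun i => by rcases eq_or_ne i i₀ with rfl | hi <;> simp [T', *]) hsum
  exact ⟨r, by simpa [T'] using hr i₀⟩

theorem IsCover.exists_isGCD {n K t N : ℕ} {B : Fin N → Finset (Fin n)} (hB : IsCover n K t B)
    (htn : t ≤ n) {ι : Type*} [Fintype ι] {v k : ι → ℕ} (hv : ∀ i, v i ≤ n)
    (hK : ∀ i, K ≤ k i) (hkv : ∀ i, k i ≤ v i) :
    ∃ D : Fin N → ∀ i, Finset (Fin (v i)), IsGCD v k t D := by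
  have hpad r i := (B r).exists_card_eq_forall_map_subset (Fin.castLEEmb (hv i))
    ((hB.1 r).trans_le (hK i)) (by simpa using hkv i)
  choose D hDcard hD using hpad
  refine ⟨D, hDcard, fun T _ hsum => ?_⟩
  obtain ⟨r, hr⟩ := hB.exists_subset_of_card_le htn
    (S := univ.biUnion fun i => (T i).map (Fin.castLEEmb (hv i)))
    (card_biUnion_le.trans (by simp [hsum]))
  exact ⟨r, fun i => hD r i (T i) ((subset_biUnion_of_mem _ (mem_univ i)).trans hr)⟩

theorem GCNum_eq_coverNum {ι : Type*} [Fintype ι] {v k : ι → ℕ} {t : ℕ} (i₀ : ι)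
    (hv : ∀ i, v i ≤ v i₀) (hk : ∀ i, k i₀ ≤ k i) (hkv : ∀ i, k i ≤ v i) (ht : t ≤ k i₀) :
    GCNum v k t = coverNum (v i₀) (k i₀) t :=
  congrArg sInf (Set.ext fun _ => ⟨fun ⟨_, hD⟩ => ⟨_, hD.isCover_apply i₀ ht⟩,
    fun ⟨_, hB⟩ => hB.exists_isGCD (ht.trans (hkv i₀)) hv hk hkv⟩)

/-- If all `k_i ≥ 2` and some index `i₀` attains both `v_{i₀} = v_max` and `k_{i₀} = k_min`,
then `C(v,k,2) = C(v_max, k_min, 2)`. -/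
theorem gc_eq_maxmin {m : ℕ} (v k : Fin m → ℕ)
    (hk : ∀ i, 2 ≤ k i) (hkv : ∀ i, k i ≤ v i) (i₀ : Fin m)
    (hmax : v i₀ = Finset.univ.sup v)
    (hmin : k i₀ = Finset.univ.inf' (Finset.univ_nonempty_iff.mpr ⟨i₀⟩) k) :
    GCNum v k 2
      = coverNum (Finset.univ.sup v)
          (Finset.univ.inf' (Finset.univ_nonempty_iff.mpr ⟨i₀⟩) k) 2 := by
  rw [← hmax, ← hmin]
  exact GCNum_eq_coverNum i₀ (fun i => hmax ▸ le_sup (mem_univ i))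
    (fun i => hmin ▸ inf'_le _ (mem_univ i)) hkv (hk i₀)
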